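/- Let c₁ = 355.03, c₂ = −68.19, c₃ = 791.32, let V(φ) = c₁(1 + cos φ) + c₂(1 − cos 2φ) + c₃(1 + cos 3φ), and for n ≥ 1 define fₙ : (Fin n → ℝ) → ℝ by fₙ(φ₁, …, φₙ) = Σᵢ V(φᵢ). Then for every 0 ≤ k ≤ n, the set of critical points x of fₙ in [0, 2π)ⁿ for which exactly k coordinates i satisfy V″(xᵢ) < 0 (i.e., the critical points of Morse index k) is finite and has exactly 3ⁿ · C(n, k) elements, where C(n, k) is the binomial coefficient. -/

import Mathlib

/-!
The function fₙ is a sum of copies of V in separate variables, so its critical points in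
[0, 2π)ⁿ are the tuples of critical points of V in [0, 2π), with Morse index the number of
coordinates where V″ < 0. Writing V′(φ) = -sin φ · Q(cos φ) for a quadratic Q with one root in
(-1, 0) and one in (0, 1), V has six critical points: at 0 and π, where sin vanishes, V″ = -Q(1) < 0
and V″ = Q(-1) > 0; at the four angles with Q(cos φ) = 0, V″ = sin² φ · Q′(cos φ), and Q′ is
negative at the negative root and positive at the positive one. So three critical points have
V″ < 0 and three have V″ > 0, and choosing which k coordinates lie among the former gives
C(n, k) · 3ᵏ · 3ⁿ⁻ᵏ critical points of index k.
-/

open Real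

/-- The butane dihedral potential (energies in units of k_B·K). -/
noncomputable def V (φ : ℝ) : ℝ :=
  355.03 * (1 + Real.cos φ) + (-68.19) * (1 - Real.cos (2 * φ)) +
    791.32 * (1 + Real.cos (3 * φ))

open scoped Finset

section PiFinset

open Finset
variable {ι α : Type*} [Fintype ι] [DecidableEq ι]

theorem filter_piFinset_eq_piFinset_ite (s : Finset α) (p : α → Prop) [DecidablePred p]
    (T : Finset ι) :
    {x ∈ Fintype.piFinset fun _ : ι => s | ({i | p (x i)} : Finset ι) = T} =
      Fintype.piFinset fun i => if i ∈ T then {a ∈ s | p a} else {a ∈ s | ¬p a} := by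
  ext x
  simp only [mem_filter, Fintype.mem_piFinset, Finset.ext_iff, mem_univ, true_and]
  constructor
  · rintro ⟨hs, hT⟩ i
    split_ifs with hi <;> simp_all
  · intro h
    refine ⟨fun i => ?_, fun i => ?_⟩ <;> have := h i <;> split_ifs at this <;> simp_all

theorem card_filter_piFinset_card_filter_eq (s : Finset α) (p : α → Prop) [DecidablePred p]
    (k : ℕ) :
    #{x ∈ Fintype.piFinset fun _ : ι => s | #{i | p (x i)} = k} =
      (Fintype.card ι).choose k * #{a ∈ s | p a} ^ k * #{a ∈ s | ¬p a} ^ (Fintype.card ι - k) := by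
  have hmaps : ∀ x ∈ {x ∈ Fintype.piFinset fun _ : ι => s | #{i | p (x i)} = k},
      ({i | p (x i)} : Finset ι) ∈ powersetCard k (univ : Finset ι) := fun x hx =>
    mem_powersetCard.2 ⟨subset_univ _, (mem_filter.1 hx).2⟩
  rw [card_eq_sum_card_fiberwise hmaps, ← card_univ, ← card_powersetCard, card_eq_sum_ones,
    sum_mul, sum_mul]
  refine sum_congr rfl fun T hT => ?_
  obtain ⟨-, rfl⟩ := mem_powersetCard.1 hT
  rw [filter_filter, filter_congr fun x _ => and_iff_right_of_imp fun h => congrArg card h,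
    filter_piFinset_eq_piFinset_ite, Fintype.card_piFinset, prod_apply_ite, prod_const, prod_const,
    filter_mem_eq_inter, univ_inter, filter_notMem_eq_sdiff, card_univ_sdiff, one_mul, card_univ]

end PiFinset

theorem fderiv_sum_comp_apply_eq_zero_iff {ι : Type*} [Fintype ι] {f : ℝ → ℝ} {x : ι → ℝ}
    (hf : ∀ i, DifferentiableAt ℝ f (x i)) :
    fderiv ℝ (fun y : ι → ℝ => ∑ i, f (y i)) x = 0 ↔ ∀ i, deriv f (x i) = 0 := by
  classical
  have hsum : HasFDerivAt (fun y : ι → ℝ => ∑ i, f (y i))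
      (∑ i, deriv f (x i) • ContinuousLinearMap.proj i) x :=
    HasFDerivAt.fun_sum fun i _ =>
      (hf i).hasDerivAt.comp_hasFDerivAt x (hasFDerivAt_apply (𝕜 := ℝ) i x)
  rw [hsum.fderiv]
  constructor
  · intro h j
    simpa [Pi.single_apply] using congrArg (· (Pi.single j 1)) h
  · intro h
    ext v
    simp [h]

theorem Real.cos_eq_iff_eq_arccos_or_eq_two_pi_sub_arccos {φ t : ℝ} (hφ : φ ∈ Set.Ico 0 (2 * π))
    (ht : t ∈ Set.Icc (-1) 1) : cos φ = t ↔ φ = arccos t ∨ φ = 2 * π - arccos t := by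
  constructor
  · rintro rfl
    rcases le_or_gt φ π with hπ | hπ
    · exact .inl (arccos_cos hφ.1 hπ).symm
    · right
      rw [← cos_two_pi_sub, arccos_cos (by linarith [hφ.2]) (by linarith)]
      ring
  · rintro (rfl | rfl)
    · exact cos_arccos ht.1 ht.2
    · rw [cos_two_pi_sub, cos_arccos ht.1 ht.2]

namespace Butane

open Set

/-- By the double- and triple-angle formulas, `V′(φ) = -sin φ · Q(cos φ)`; the coefficients are
`12 c₃`, `-4 c₂` and `c₁ - 3 c₃`. -/
noncomputable def Q (t : ℝ) : ℝ := 9495.84 * (t * t) + 272.76 * t + -2018.93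

theorem hasDerivAt_Q (t : ℝ) : HasDerivAt Q (2 * 9495.84 * t + 272.76) t := by
  refine (((((hasDerivAt_id' t).fun_mul (hasDerivAt_id' t)).const_mul 9495.84).add
    ((hasDerivAt_id' t).const_mul 272.76)).add_const (-2018.93)).congr_deriv ?_
  ring

theorem hasDerivAt_V (φ : ℝ) : HasDerivAt V (-sin φ * Q (cos φ)) φ := by
  have hcos (m : ℝ) : HasDerivAt (fun x => cos (m * x)) (-sin (m * φ) * m) φ :=
    ((hasDerivAt_cos (m * φ)).comp φ ((hasDerivAt_id' φ).const_mul m)).congr_deriv (by ring)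
  refine (((((hasDerivAt_cos φ).const_add 1).const_mul 355.03).add
    (((hcos 2).const_sub 1).const_mul (-68.19))).add
      (((hcos 3).const_add 1).const_mul 791.32)).congr_deriv ?_
  rw [sin_two_mul, sin_three_mul, Q]
  linear_combination (9495.84 * sin φ) * sin_sq_add_cos_sq φ

theorem deriv_V : deriv V = fun φ => -sin φ * Q (cos φ) :=
  funext fun φ => (hasDerivAt_V φ).deriv

theorem deriv_deriv_V (φ : ℝ) :
    deriv (deriv V) φ = -cos φ * Q (cos φ) + sin φ ^ 2 * (2 * 9495.84 * cos φ + 272.76) := by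
  rw [deriv_V]
  refine (((hasDerivAt_sin φ).neg.mul
    ((hasDerivAt_Q (cos φ)).comp φ (hasDerivAt_cos φ))).congr_deriv ?_).deriv
  simp only [Pi.neg_apply, Function.comp_apply]
  ring

noncomputable def sqrtDiscrim : ℝ := √(discrim 9495.84 272.76 (-2018.93))

noncomputable def rootPos : ℝ := (-272.76 + sqrtDiscrim) / (2 * 9495.84)

noncomputable def rootNeg : ℝ := (-272.76 - sqrtDiscrim) / (2 * 9495.84)

theorem Q_eq_zero_iff (t : ℝ) : Q t = 0 ↔ t = rootPos ∨ t = rootNeg :=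
  quadratic_eq_zero_iff (by norm_num)
    (Real.mul_self_sqrt (by norm_num [discrim])).symm t

theorem sqrtDiscrim_pos : 0 < sqrtDiscrim :=
  Real.sqrt_pos.2 (by norm_num [discrim])

theorem sqrtDiscrim_lt : sqrtDiscrim < 2 * 9495.84 - 272.76 :=
  (Real.sqrt_lt' (by norm_num)).2 (by norm_num [discrim])

theorem rootPos_mem_Ioo : rootPos ∈ Ioo (-1) 1 := by
  rw [rootPos, mem_Ioo, lt_div_iff₀ (by norm_num), div_lt_one (by norm_num)]
  constructor <;> linarith [sqrtDiscrim_pos, sqrtDiscrim_lt]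

theorem rootNeg_mem_Ioo : rootNeg ∈ Ioo (-1) 1 := by
  rw [rootNeg, mem_Ioo, lt_div_iff₀ (by norm_num), div_lt_one (by norm_num)]
  constructor <;> linarith [sqrtDiscrim_pos, sqrtDiscrim_lt]

theorem derivQ_rootPos : 2 * 9495.84 * rootPos + 272.76 = sqrtDiscrim := by
  rw [rootPos]; field_simp; ring

theorem derivQ_rootNeg : 2 * 9495.84 * rootNeg + 272.76 = -sqrtDiscrim := by
  rw [rootNeg]; field_simp; ring

theorem deriv_deriv_V_of_cos_eq_root {φ t : ℝ} (hφ : cos φ = t) (ht : Q t = 0) :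
    deriv (deriv V) φ = sin φ ^ 2 * (2 * 9495.84 * t + 272.76) := by
  rw [deriv_deriv_V, hφ, ht]; ring

theorem sin_sq_pos_of_cos_mem_Ioo {φ : ℝ} (h : cos φ ∈ Ioo (-1) 1) : 0 < sin φ ^ 2 := by
  rw [sin_sq]
  nlinarith [h.1, h.2]

theorem deriv_deriv_V_pos_of_cos_eq_rootPos {φ : ℝ} (hφ : cos φ = rootPos) :
    0 < deriv (deriv V) φ := by
  rw [deriv_deriv_V_of_cos_eq_root hφ ((Q_eq_zero_iff _).2 (.inl rfl)), derivQ_rootPos]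
  exact mul_pos (sin_sq_pos_of_cos_mem_Ioo (hφ ▸ rootPos_mem_Ioo)) sqrtDiscrim_pos

theorem deriv_deriv_V_neg_of_cos_eq_rootNeg {φ : ℝ} (hφ : cos φ = rootNeg) :
    deriv (deriv V) φ < 0 := by
  rw [deriv_deriv_V_of_cos_eq_root hφ ((Q_eq_zero_iff _).2 (.inr rfl)), derivQ_rootNeg]
  exact mul_neg_of_pos_of_neg (sin_sq_pos_of_cos_mem_Ioo (hφ ▸ rootNeg_mem_Ioo))
    (neg_neg_of_pos sqrtDiscrim_pos)

noncomputable def maxima : Finset ℝ := {0, arccos rootNeg, 2 * π - arccos rootNeg}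

noncomputable def minima : Finset ℝ := {π, arccos rootPos, 2 * π - arccos rootPos}

theorem deriv_V_eq_zero_iff_cos (φ : ℝ) :
    deriv V φ = 0 ↔ cos φ = 1 ∨ cos φ = -1 ∨ cos φ = rootPos ∨ cos φ = rootNeg := by
  rw [deriv_V, mul_eq_zero, neg_eq_zero, sin_eq_zero_iff_cos_eq, Q_eq_zero_iff, or_assoc]

theorem deriv_V_eq_zero_iff_mem {φ : ℝ} (hφ : φ ∈ Ico 0 (2 * π)) :
    deriv V φ = 0 ↔ φ ∈ maxima ∪ minima := by
  have hIcc {t : ℝ} (ht : t ∈ Ioo (-1) 1) : t ∈ Icc (-1) 1 := Ioo_subset_Icc_self ht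
  rw [deriv_V_eq_zero_iff_cos, cos_eq_one_iff_of_lt_of_lt (by linarith [hφ.1, pi_pos]) hφ.2,
    cos_eq_iff_eq_arccos_or_eq_two_pi_sub_arccos hφ (by norm_num),
    cos_eq_iff_eq_arccos_or_eq_two_pi_sub_arccos hφ (hIcc rootPos_mem_Ioo),
    cos_eq_iff_eq_arccos_or_eq_two_pi_sub_arccos hφ (hIcc rootNeg_mem_Ioo), arccos_neg_one,
    show 2 * π - π = π by ring, or_self]
  simp only [maxima, minima, Finset.mem_union, Finset.mem_insert, Finset.mem_singleton]
  tauto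

theorem mem_Ico_of_mem_union {φ : ℝ} (h : φ ∈ maxima ∪ minima) : φ ∈ Ico 0 (2 * π) := by
  simp only [maxima, minima, Finset.mem_union, Finset.mem_insert, Finset.mem_singleton] at h
  rcases h with (rfl | rfl | rfl) | (rfl | rfl | rfl) <;> constructor <;>
    linarith [pi_pos, arccos_pos.2 rootPos_mem_Ioo.2, arccos_pos.2 rootNeg_mem_Ioo.2,
      arccos_le_pi rootPos, arccos_le_pi rootNeg]

theorem mem_Ico_and_deriv_V_eq_zero_iff (φ : ℝ) :
    φ ∈ Ico 0 (2 * π) ∧ deriv V φ = 0 ↔ φ ∈ maxima ∪ minima :=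
  ⟨fun h => (deriv_V_eq_zero_iff_mem h.1).1 h.2,
    fun h => ⟨mem_Ico_of_mem_union h, (deriv_V_eq_zero_iff_mem (mem_Ico_of_mem_union h)).2 h⟩⟩

theorem deriv_deriv_V_neg_of_mem_maxima {φ : ℝ} (h : φ ∈ maxima) : deriv (deriv V) φ < 0 := by
  simp only [maxima, Finset.mem_insert, Finset.mem_singleton] at h
  rcases h with rfl | rfl | rfl
  · norm_num [deriv_deriv_V, Q]
  · exact deriv_deriv_V_neg_of_cos_eq_rootNeg
      (cos_arccos rootNeg_mem_Ioo.1.le rootNeg_mem_Ioo.2.le)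
  · exact deriv_deriv_V_neg_of_cos_eq_rootNeg
      (by rw [cos_two_pi_sub, cos_arccos rootNeg_mem_Ioo.1.le rootNeg_mem_Ioo.2.le])

theorem deriv_deriv_V_pos_of_mem_minima {φ : ℝ} (h : φ ∈ minima) : 0 < deriv (deriv V) φ := by
  simp only [minima, Finset.mem_insert, Finset.mem_singleton] at h
  rcases h with rfl | rfl | rfl
  · norm_num [deriv_deriv_V, Q]
  · exact deriv_deriv_V_pos_of_cos_eq_rootPos
      (cos_arccos rootPos_mem_Ioo.1.le rootPos_mem_Ioo.2.le)
  · exact deriv_deriv_V_pos_of_cos_eq_rootPos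
      (by rw [cos_two_pi_sub, cos_arccos rootPos_mem_Ioo.1.le rootPos_mem_Ioo.2.le])

theorem card_insert_arccos_two_pi_sub_arccos {x t : ℝ} (hx : x = 0 ∨ x = π)
    (ht : t ∈ Ioo (-1) 1) : #{x, arccos t, 2 * π - arccos t} = 3 := by
  have h0 := arccos_pos.2 ht.2
  have hπ := arccos_lt_pi.2 ht.1
  refine Finset.card_eq_three.2 ⟨_, _, _, ?_, ?_, ?_, rfl⟩ <;> rcases hx with rfl | rfl <;>
    intro h <;> linarith

theorem card_maxima : #maxima = 3 :=
  card_insert_arccos_two_pi_sub_arccos (.inl rfl) rootNeg_mem_Ioo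

theorem card_minima : #minima = 3 :=
  card_insert_arccos_two_pi_sub_arccos (.inr rfl) rootPos_mem_Ioo

theorem filter_deriv_deriv_V_neg : {φ ∈ maxima ∪ minima | deriv (deriv V) φ < 0} = maxima := by
  rw [Finset.filter_union, Finset.filter_true_of_mem fun _ => deriv_deriv_V_neg_of_mem_maxima,
    Finset.filter_false_of_mem fun _ h => (deriv_deriv_V_pos_of_mem_minima h).not_gt,
    Finset.union_empty]

theorem filter_not_deriv_deriv_V_neg :
    {φ ∈ maxima ∪ minima | ¬deriv (deriv V) φ < 0} = minima := by
  rw [Finset.filter_union,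
    Finset.filter_false_of_mem fun _ h => not_not_intro (deriv_deriv_V_neg_of_mem_maxima h),
    Finset.filter_true_of_mem fun _ h => (deriv_deriv_V_pos_of_mem_minima h).not_gt,
    Finset.empty_union]

end Butane

theorem alkane_critical_points_of_index_general (n : ℕ) (k : ℕ) (hk : k ≤ n) :
    {x : Fin n → ℝ | (∀ i, x i ∈ Set.Ico (0 : ℝ) (2 * π)) ∧
      fderiv ℝ (fun y : Fin n → ℝ => ∑ i, V (y i)) x = 0 ∧
      (Finset.univ.filter fun i => deriv (deriv V) (x i) < 0).card = k}.Finite ∧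
    {x : Fin n → ℝ | (∀ i, x i ∈ Set.Ico (0 : ℝ) (2 * π)) ∧
      fderiv ℝ (fun y : Fin n → ℝ => ∑ i, V (y i)) x = 0 ∧
      (Finset.univ.filter fun i => deriv (deriv V) (x i) < 0).card = k}.ncard =
      3 ^ n * n.choose k := by
  have hset : {x : Fin n → ℝ | (∀ i, x i ∈ Set.Ico (0 : ℝ) (2 * π)) ∧
      fderiv ℝ (fun y : Fin n → ℝ => ∑ i, V (y i)) x = 0 ∧
      (Finset.univ.filter fun i => deriv (deriv V) (x i) < 0).card = k} =
      (({x ∈ Fintype.piFinset fun _ => Butane.maxima ∪ Butane.minima |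
        #{i | deriv (deriv V) (x i) < 0} = k} : Finset (Fin n → ℝ)) : Set (Fin n → ℝ)) := by
    ext x
    simp only [Set.mem_ofPred_eq, Finset.coe_filter, Fintype.mem_piFinset,
      fderiv_sum_comp_apply_eq_zero_iff fun i => (Butane.hasDerivAt_V (x i)).differentiableAt,
      ← Butane.mem_Ico_and_deriv_V_eq_zero_iff, forall_and, and_assoc]
  rw [hset, Set.ncard_coe_finset,
    card_filter_piFinset_card_filter_eq _ fun φ => deriv (deriv V) φ < 0,
    Butane.filter_deriv_deriv_V_neg, Butane.filter_not_deriv_deriv_V_neg, Butane.card_maxima,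
    Butane.card_minima, Fintype.card_fin, mul_assoc, ← pow_add, Nat.add_sub_cancel' hk, mul_comm]
  exact ⟨Finset.finite_toSet _, rfl⟩

/-- The alkane landscape `fₙ(φ₁, …, φₙ) = Σᵢ V(φᵢ)` has exactly `3ⁿ · C(n, k)`
critical points of Morse index `k` in the fundamental domain `[0, 2π)ⁿ`, the
Morse index being the number of coordinates with `V″(xᵢ) < 0`. -/
theorem alkane_critical_points_of_index (n : ℕ) (hn : 1 ≤ n) (k : ℕ) (hk : k ≤ n) :
    {x : Fin n → ℝ | (∀ i, x i ∈ Set.Ico (0 : ℝ) (2 * π)) ∧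
      fderiv ℝ (fun y : Fin n → ℝ => ∑ i, V (y i)) x = 0 ∧
      (Finset.univ.filter fun i => deriv (deriv V) (x i) < 0).card = k}.Finite ∧
    {x : Fin n → ℝ | (∀ i, x i ∈ Set.Ico (0 : ℝ) (2 * π)) ∧
      fderiv ℝ (fun y : Fin n → ℝ => ∑ i, V (y i)) x = 0 ∧
      (Finset.univ.filter fun i => deriv (deriv V) (x i) < 0).card = k}.ncard =
      3 ^ n * n.choose k :=
  alkane_critical_points_of_index_general n k hk
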